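/- arXiv:1811.01599 — 5 statements merged into one kernel-verified Lean document; each statement's English description precedes it below -/
import Mathlib

section
/- For every real p ≥ 2 there exists a constant C_p > 0, depending only on p, such that the following pointwise inequality holds. Let N ≥ 1, let x₀ ∈ ℝ^N, and let u, v be positive real-valued functions differentiable at x₀. Writing all quantities at the point x₀, with ∇ denoting the gradient, one has: |∇u|^{p-2} ⟨∇u, ∇(u - v^p u^{1-p})⟩ + |∇v|^{p-2} ⟨∇v, ∇(v - u^p v^{1-p})⟩ ≥ C_p · min{u^p, v^p} · (|∇u/u| + |∇v/v|)^{p-2} · |∇u/u - ∇v/v|². -/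
open Real RealInnerProductSpace

/-!
Write `A = ∇ log u` and `B = ∇ log v`. The chain rule turns the left-hand side into
`u^p D(A, B) + v^p D(B, A)`, where `D` is the Bregman divergence of `ξ ↦ |ξ|^p`. Both divergences
are nonnegative by Young's inequality, so the sum is at least
`min(u^p, v^p) (D(A, B) + D(B, A)) = min(u^p, v^p) p ⟨|A|^{p-2} A - |B|^{p-2} B, A - B⟩`, and the
classical monotonicity estimate for `ξ ↦ |ξ|^{p-2} ξ` bounds this inner product from below by
`½ (|A|^{p-2} + |B|^{p-2}) |A - B|²`; finally `(|A| + |B|)^{p-2} ≤ 2^{p-2} (|A|^{p-2} + |B|^{p-2})`.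
-/

lemma Real.rpow_sub_two_mul_sq {x p : ℝ} (hx : 0 ≤ x) (hp : p ≠ 0) :
    x ^ (p - 2) * x ^ 2 = x ^ p := by
  rw [← rpow_natCast, ← rpow_add' hx (by simpa using hp)]
  norm_num

lemma Real.add_rpow_le_two_rpow_mul_rpow_add_rpow {s t r : ℝ} (hs : 0 ≤ s) (ht : 0 ≤ t)
    (hr : 0 ≤ r) : (s + t) ^ r ≤ 2 ^ r * (s ^ r + t ^ r) := calc
  (s + t) ^ r ≤ (2 * max s t) ^ r := by
    gcongr; linarith [le_max_left s t, le_max_right s t]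
  _ = 2 ^ r * max s t ^ r := mul_rpow zero_le_two (le_max_of_le_left hs)
  _ ≤ 2 ^ r * (s ^ r + t ^ r) := by
    gcongr
    rcases le_total s t with h | h
    · simpa [max_eq_right h] using rpow_nonneg hs r
    · simpa [max_eq_left h] using rpow_nonneg ht r

lemma Real.mul_mul_rpow_sub_one_le_rpow_add {s t p : ℝ} (hp : 1 < p) (hs : 0 ≤ s) (ht : 0 ≤ t) :
    p * (s * t ^ (p - 1)) ≤ s ^ p + (p - 1) * t ^ p := by
  have hpq := HolderConjugate.conjExponent hp
  have hq : (t ^ (p - 1)) ^ p.conjExponent = t ^ p := by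
    rw [← rpow_mul ht, hpq.sub_one_mul_conj]
  have young := young_inequality_of_nonneg hs (rpow_nonneg ht (p - 1)) hpq
  rw [hq, conjExponent, div_div_eq_mul_div] at young
  have : p * (s ^ p / p + t ^ p * (p - 1) / p) = s ^ p + (p - 1) * t ^ p := by
    field_simp
  nlinarith

section

variable {E : Type*} [NormedAddCommGroup E] [InnerProductSpace ℝ E]

/-- `‖a‖^p - ‖b‖^p - ⟪p ‖b‖^(p-2) b, a - b⟫`, the Bregman divergence of `‖·‖ ^ p`, expanded. -/
noncomputable def normRpowBregman (p : ℝ) (a b : E) : ℝ :=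
  ‖a‖ ^ p + (p - 1) * ‖b‖ ^ p - p * (‖b‖ ^ (p - 2) * ⟪a, b⟫)

lemma normRpowBregman_nonneg {p : ℝ} (hp : 1 < p) (a b : E) : 0 ≤ normRpowBregman p a b := by
  have hb : ‖b‖ ^ (p - 2) * ‖b‖ = ‖b‖ ^ (p - 1) := by
    rw [← rpow_add_one' (norm_nonneg b) (by linarith)]
    ring_nf
  have hinner : ‖b‖ ^ (p - 2) * ⟪a, b⟫ ≤ ‖a‖ * ‖b‖ ^ (p - 1) := calc
    ‖b‖ ^ (p - 2) * ⟪a, b⟫ ≤ ‖b‖ ^ (p - 2) * (‖a‖ * ‖b‖) := by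
      gcongr
      exact real_inner_le_norm a b
    _ = ‖a‖ * ‖b‖ ^ (p - 1) := by rw [← hb]; ring
  have young := mul_mul_rpow_sub_one_le_rpow_add hp (norm_nonneg a) (norm_nonneg b)
  unfold normRpowBregman
  nlinarith

lemma le_inner_norm_rpow_smul_sub_norm_rpow_smul {r : ℝ} (hr : 0 ≤ r) (a b : E) :
    (‖a‖ ^ r + ‖b‖ ^ r) / 2 * ‖a - b‖ ^ 2 ≤ ⟪‖a‖ ^ r • a - ‖b‖ ^ r • b, a - b⟫ := by
  have hmono : 0 ≤ (‖a‖ ^ r - ‖b‖ ^ r) * (‖a‖ - ‖b‖) := by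
    rcases le_total ‖a‖ ‖b‖ with h | h
    · exact mul_nonneg_of_nonpos_of_nonpos
        (sub_nonpos.2 (rpow_le_rpow (norm_nonneg a) h hr)) (sub_nonpos.2 h)
    · exact mul_nonneg
        (sub_nonneg.2 (rpow_le_rpow (norm_nonneg b) h hr)) (sub_nonneg.2 h)
  rw [inner_sub_left, inner_sub_right, inner_sub_right, real_inner_smul_left,
    real_inner_smul_left, real_inner_smul_left, real_inner_smul_left, norm_sub_sq_real,
    real_inner_self_eq_norm_sq, real_inner_self_eq_norm_sq, real_inner_comm a b]
  -- the gap is `½ (‖a‖^r - ‖b‖^r) (‖a‖² - ‖b‖²)`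
  nlinarith [mul_nonneg hmono (add_nonneg (norm_nonneg a) (norm_nonneg b))]

lemma normRpowBregman_add_swap {p : ℝ} (hp : p ≠ 0) (a b : E) :
    normRpowBregman p a b + normRpowBregman p b a
      = p * ⟪‖a‖ ^ (p - 2) • a - ‖b‖ ^ (p - 2) • b, a - b⟫ := by
  have ha := rpow_sub_two_mul_sq (norm_nonneg a) hp
  have hb := rpow_sub_two_mul_sq (norm_nonneg b) hp
  unfold normRpowBregman
  rw [inner_sub_left, inner_sub_right, inner_sub_right, real_inner_smul_left,
    real_inner_smul_left, real_inner_smul_left, real_inner_smul_left,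
    real_inner_self_eq_norm_sq, real_inner_self_eq_norm_sq, real_inner_comm a b]
  linear_combination (-p) * ha - p * hb

lemma two_rpow_mul_le_normRpowBregman_add_swap {p : ℝ} (hp : 2 ≤ p) (a b : E) :
    2 ^ (2 - p) * (‖a‖ + ‖b‖) ^ (p - 2) * ‖a - b‖ ^ 2
      ≤ normRpowBregman p a b + normRpowBregman p b a := by
  have hX : 0 ≤ (‖a‖ ^ (p - 2) + ‖b‖ ^ (p - 2)) * ‖a - b‖ ^ 2 := by positivity
  calc 2 ^ (2 - p) * (‖a‖ + ‖b‖) ^ (p - 2) * ‖a - b‖ ^ 2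
      ≤ 2 ^ (2 - p) * (2 ^ (p - 2) * (‖a‖ ^ (p - 2) + ‖b‖ ^ (p - 2))) * ‖a - b‖ ^ 2 := by
        gcongr
        exact add_rpow_le_two_rpow_mul_rpow_add_rpow (norm_nonneg a) (norm_nonneg b)
          (by linarith)
    _ = (‖a‖ ^ (p - 2) + ‖b‖ ^ (p - 2)) * ‖a - b‖ ^ 2 := by
        rw [← mul_assoc, ← rpow_add two_pos]
        norm_num
    _ ≤ p * ((‖a‖ ^ (p - 2) + ‖b‖ ^ (p - 2)) / 2 * ‖a - b‖ ^ 2) := by nlinarith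
    _ ≤ p * ⟪‖a‖ ^ (p - 2) • a - ‖b‖ ^ (p - 2) • b, a - b⟫ := by
        gcongr
        exact le_inner_norm_rpow_smul_sub_norm_rpow_smul (by linarith) a b
    _ = _ := (normRpowBregman_add_swap (by linarith) a b).symm

/-- A term of the left-hand side, in the variables `U = u(x₀)`, `A = ∇ log u(x₀)`, `V = v(x₀)`,
`B = ∇ log v(x₀)`. -/
lemma norm_rpow_mul_inner_smul_add_smul {p U : ℝ} (hp : p ≠ 0) (hU : 0 < U) (V : ℝ) (A B : E) :
    ‖U • A‖ ^ (p - 2) * ⟪U • A, U • A + (V ^ p * U ^ (1 - p)) • ((p - 1) • A - p • B)⟫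
      = U ^ p * ‖A‖ ^ p + V ^ p * ((p - 1) * ‖A‖ ^ p - p * (‖A‖ ^ (p - 2) * ⟪B, A⟫)) := by
  have hA := rpow_sub_two_mul_sq (norm_nonneg A) hp
  have hU2 := rpow_sub_two_mul_sq hU.le hp
  have hU1 : U ^ (p - 2) * U * U ^ (1 - p) = 1 := by
    rw [← rpow_add_one hU.ne', ← rpow_add hU, show p - 2 + 1 + (1 - p) = 0 by ring, rpow_zero]
  rw [norm_smul, norm_of_nonneg hU.le, mul_rpow hU.le (norm_nonneg A)]
  simp only [inner_add_right, inner_sub_right, real_inner_smul_left, real_inner_smul_right,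
    real_inner_self_eq_norm_sq, norm_smul, norm_of_nonneg hU.le, real_inner_comm A B]
  linear_combination (‖A‖ ^ 2 * ‖A‖ ^ (p - 2)) * hU2 + U ^ p * hA
    + (V ^ p * (‖A‖ ^ (p - 2) * ((p - 1) * ‖A‖ ^ 2 - p * ⟪A, B⟫))) * hU1
    + (V ^ p * (p - 1)) * hA

variable [CompleteSpace E]

noncomputable def logGradient (u : E → ℝ) (x : E) : E := (u x)⁻¹ • gradient u x

lemma gradient_eq_smul_logGradient {u : E → ℝ} {x : E} (hu : u x ≠ 0) :
    gradient u x = u x • logGradient u x :=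
  (smul_inv_smul₀ hu _).symm

lemma gradient_sub_rpow_mul_rpow {u v : E → ℝ} {x : E} (p : ℝ) (hu0 : 0 < u x) (hv0 : 0 < v x)
    (hu : DifferentiableAt ℝ u x) (hv : DifferentiableAt ℝ v x) :
    gradient (fun y => u y - v y ^ p * u y ^ (1 - p)) x
      = u x • logGradient u x
        + (v x ^ p * u x ^ (1 - p)) • ((p - 1) • logGradient u x - p • logGradient v x) := by
  have hu' := hu.hasGradientAt.hasFDerivAt
  have hv' := hv.hasGradientAt.hasFDerivAt
  have hderiv : HasFDerivAt (fun y => u y - v y ^ p * u y ^ (1 - p)) _ x :=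
    hu'.sub ((hv'.rpow_const (p := p) (Or.inl hv0.ne')).mul
      (hu'.rpow_const (p := 1 - p) (Or.inl hu0.ne')))
  rw [hderiv.hasGradientAt.gradient]
  simp only [map_sub, map_add, map_smul, LinearIsometryEquiv.symm_apply_apply, logGradient,
    rpow_sub_one hu0.ne', rpow_sub_one hv0.ne']
  match_scalars
  · field_simp
    ring
  · field_simp

end

/-- For every `p ≥ 2` there is `C_p > 0` such that for positive differentiable
functions `u, v` at a point `x₀` of `ℝ^N`,
`|∇u|^{p-2} ⟨∇u, ∇(u - v^p u^{1-p})⟩ + |∇v|^{p-2} ⟨∇v, ∇(v - u^p v^{1-p})⟩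
  ≥ C_p min{u^p, v^p} (|∇log u| + |∇log v|)^{p-2} |∇log u - ∇log v|²` at `x₀`. -/
theorem pointwise_log_gradient_inequality
    (p : ℝ) (hp : 2 ≤ p) :
    ∃ C > (0 : ℝ), ∀ (N : ℕ), 1 ≤ N →
      ∀ (x₀ : EuclideanSpace ℝ (Fin N)) (u v : EuclideanSpace ℝ (Fin N) → ℝ),
      (∀ x, 0 < u x) → (∀ x, 0 < v x) →
      DifferentiableAt ℝ u x₀ → DifferentiableAt ℝ v x₀ →
      C * min (u x₀ ^ p) (v x₀ ^ p) *
          (‖(u x₀)⁻¹ • gradient u x₀‖ + ‖(v x₀)⁻¹ • gradient v x₀‖) ^ (p - 2) *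
          ‖(u x₀)⁻¹ • gradient u x₀ - (v x₀)⁻¹ • gradient v x₀‖ ^ 2
        ≤ ‖gradient u x₀‖ ^ (p - 2) *
            ⟪gradient u x₀, gradient (fun x => u x - v x ^ p * u x ^ (1 - p)) x₀⟫
          + ‖gradient v x₀‖ ^ (p - 2) *
            ⟪gradient v x₀, gradient (fun x => v x - u x ^ p * v x ^ (1 - p)) x₀⟫ := by
  refine ⟨2 ^ (2 - p), by positivity, fun N _ x₀ u v hu hv hud hvd => ?_⟩
  have hU := hu x₀
  have hV := hv x₀
  have hp0 : p ≠ 0 := by linarith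
  change _ * (‖logGradient u x₀‖ + ‖logGradient v x₀‖) ^ (p - 2)
    * ‖logGradient u x₀ - logGradient v x₀‖ ^ 2 ≤ _
  rw [gradient_sub_rpow_mul_rpow p hU hV hud hvd, gradient_sub_rpow_mul_rpow p hV hU hvd hud,
    gradient_eq_smul_logGradient hU.ne', gradient_eq_smul_logGradient hV.ne',
    norm_rpow_mul_inner_smul_add_smul hp0 hU, norm_rpow_mul_inner_smul_add_smul hp0 hV]
  set A := logGradient u x₀
  set B := logGradient v x₀
  have hm : 0 ≤ min (u x₀ ^ p) (v x₀ ^ p) := le_min (by positivity) (by positivity)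
  calc 2 ^ (2 - p) * min (u x₀ ^ p) (v x₀ ^ p) * (‖A‖ + ‖B‖) ^ (p - 2) * ‖A - B‖ ^ 2
      = min (u x₀ ^ p) (v x₀ ^ p) * (2 ^ (2 - p) * (‖A‖ + ‖B‖) ^ (p - 2) * ‖A - B‖ ^ 2) := by
        ring
    _ ≤ min (u x₀ ^ p) (v x₀ ^ p) * normRpowBregman p A B
        + min (u x₀ ^ p) (v x₀ ^ p) * normRpowBregman p B A := by
        rw [← mul_add]
        exact mul_le_mul_of_nonneg_left (two_rpow_mul_le_normRpowBregman_add_swap hp A B) hm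
    _ ≤ u x₀ ^ p * normRpowBregman p A B + v x₀ ^ p * normRpowBregman p B A := by
        gcongr
        exacts [normRpowBregman_nonneg (by linarith) A B, min_le_left _ _,
          normRpowBregman_nonneg (by linarith) B A, min_le_right _ _]
    _ = _ := by
        unfold normRpowBregman
        ring
end

section
/- Let N ≥ 1 be an integer, p ≥ 2 a real number, and a, b ∈ ℝ^N. Then |b|^p ≥ |a|^p + p |a|^{p-2} ⟨a, b-a⟩ + p ∫₀¹ (1-t) |a + t(b-a)|^{p-2} |b-a|² dt, where ⟨·,·⟩ is the Euclidean inner product and |·| the Euclidean norm. -/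
/-!
Put `x t = a + t • v` and `f t = ‖x t‖ ^ p`, so that `f' t = p ‖x t‖ ^ (p - 2) ⟪x t, v⟫`. The
Taylor gap `R t = f 1 - f t - (1 - t) f' t - p ‖v‖² ∫ₜ¹ (1 - s) ‖x s‖ ^ (p - 2) ds` vanishes at
`t = 1`, and wherever `x t ≠ 0` its derivative is `-(1 - t) p (p - 2) ‖x t‖ ^ (p - 4) ⟪x t, v⟫²`,
which is `≤ 0` on `[0, 1]` for `p ≥ 2`. Since `x` vanishes at most once when `v ≠ 0` and `R` is
continuous, `R` is antitone on `[0, 1]`, whence `R 0 ≥ R 1 = 0`.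
-/

open Real RealInnerProductSpace intervalIntegral Set

theorem image_le_of_hasDerivAt_nonpos_off_point {f f' : ℝ → ℝ} {x y c : ℝ} (hxy : x ≤ y)
    (hf : ContinuousOn f (Icc x y))
    (hf' : ∀ t ∈ Ioo x y, t ≠ c → HasDerivAt f (f' t) t)
    (hf'_nonpos : ∀ t ∈ Ioo x y, t ≠ c → f' t ≤ 0) : f y ≤ f x := by
  have antitone_piece : ∀ x' y', x ≤ x' → x' ≤ y' → y' ≤ y → c ∉ Ioo x' y' → f y' ≤ f x' := by
    intro x' y' hx' hx'y' hy' hc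
    have hsub : Ioo x' y' ⊆ Ioo x y := Ioo_subset_Ioo hx' hy'
    have hne : ∀ t ∈ Ioo x' y', t ≠ c := fun t ht htc ↦ hc (htc ▸ ht)
    refine antitoneOn_of_hasDerivWithinAt_nonpos (f' := f') (convex_Icc x' y')
      (hf.mono (Icc_subset_Icc hx' hy')) (fun t ht ↦ ?_) (fun t ht ↦ ?_)
      (left_mem_Icc.2 hx'y') (right_mem_Icc.2 hx'y') hx'y'
    all_goals rw [interior_Icc] at ht
    · exact (hf' t (hsub ht) (hne t ht)).hasDerivWithinAt
    · exact hf'_nonpos t (hsub ht) (hne t ht)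
  by_cases hc : c ∈ Ioo x y
  · exact (antitone_piece c y hc.1.le hc.2.le le_rfl (fun h ↦ h.1.false)).trans
      (antitone_piece x c le_rfl hc.1.le hc.2.le (fun h ↦ h.2.false))
  · exact antitone_piece x y le_rfl hxy le_rfl hc

section NormRpow

variable {E : Type*} [NormedAddCommGroup E] [InnerProductSpace ℝ E]

theorem hasFDerivAt_norm_rpow_of_ne_zero (p : ℝ) {x : E} (hx : x ≠ 0) :
    HasFDerivAt (fun x : E ↦ ‖x‖ ^ p) ((p * ‖x‖ ^ (p - 2)) • innerSL ℝ x) x := by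
  convert ((hasStrictFDerivAt_norm_sq x).rpow_const (p := p / 2) (by simp [hx])).hasFDerivAt
    using 1
  · ext y
    rw [← rpow_natCast_mul (norm_nonneg y)]
    ring_nf
  · rw [← rpow_natCast_mul (norm_nonneg x), ← Nat.cast_smul_eq_nsmul ℝ, smul_smul]
    ring_nf

variable {p : ℝ} {a v : E} {t : ℝ}

variable (a v t) in
theorem hasDerivAt_const_add_smul : HasDerivAt (fun t : ℝ ↦ a + t • v) v t := by
  simpa using ((hasDerivAt_id t).smul_const v).const_add a

theorem hasDerivAt_norm_add_smul_rpow (h : a + t • v ≠ 0 ∨ 1 < p) :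
    HasDerivAt (fun t : ℝ ↦ ‖a + t • v‖ ^ p) (p * ‖a + t • v‖ ^ (p - 2) * ⟪a + t • v, v⟫) t := by
  have hnorm := h.elim (hasFDerivAt_norm_rpow_of_ne_zero p) (hasFDerivAt_norm_rpow _)
  refine (hnorm.comp_hasDerivAt t (hasDerivAt_const_add_smul a v t)).congr_deriv ?_
  simp only [smul_apply, innerSL_apply_apply, smul_eq_mul]

theorem hasDerivAt_norm_add_smul_rpow_mul_inner (hx : a + t • v ≠ 0) :
    HasDerivAt (fun t : ℝ ↦ ‖a + t • v‖ ^ p * ⟪a + t • v, v⟫)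
      (p * ‖a + t • v‖ ^ (p - 2) * ⟪a + t • v, v⟫ ^ 2 + ‖a + t • v‖ ^ p * ‖v‖ ^ 2) t := by
  have hinner := (hasDerivAt_const_add_smul a v t).inner ℝ (hasDerivAt_const t v)
  refine ((hasDerivAt_norm_add_smul_rpow (Or.inl hx)).mul hinner).congr_deriv ?_
  rw [inner_zero_right, zero_add, real_inner_self_eq_norm_sq]
  ring

theorem exists_forall_ne_add_smul_ne_zero (hv : v ≠ 0) : ∃ c : ℝ, ∀ t ≠ c, a + t • v ≠ 0 := by
  by_cases h : ∃ c : ℝ, a + c • v = 0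
  · obtain ⟨c, hc⟩ := h
    refine ⟨c, fun t htc ht ↦ htc ?_⟩
    have : (t - c) • v = (a + t • v) - (a + c • v) := by rw [sub_smul]; abel
    rw [ht, hc, sub_zero, smul_eq_zero] at this
    exact sub_eq_zero.1 (this.resolve_right hv)
  · exact ⟨0, fun t _ ↦ not_exists.1 h t⟩

theorem hasDerivAt_integral_one_sub_mul_norm_add_smul_rpow (hp : 0 ≤ p) :
    HasDerivAt (fun t ↦ ∫ s in t..1, (1 - s) * ‖a + s • v‖ ^ p)
      (-((1 - t) * ‖a + t • v‖ ^ p)) t := by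
  have hcont : Continuous fun s : ℝ ↦ (1 - s) * ‖a + s • v‖ ^ p := by
    fun_prop (disch := exact hp)
  exact integral_hasDerivAt_left (hcont.intervalIntegrable t 1)
    hcont.aestronglyMeasurable.stronglyMeasurableAtFilter hcont.continuousAt

variable (p a v) in
noncomputable def normRpowTaylorGap (t : ℝ) : ℝ :=
  ‖a + v‖ ^ p - ‖a + t • v‖ ^ p - (1 - t) * (p * (‖a + t • v‖ ^ (p - 2) * ⟪a + t • v, v⟫))
    - p * ‖v‖ ^ 2 * ∫ s in t..1, (1 - s) * ‖a + s • v‖ ^ (p - 2)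

theorem normRpowTaylorGap_one : normRpowTaylorGap p a v 1 = 0 := by
  simp [normRpowTaylorGap]

theorem continuous_normRpowTaylorGap (hp : 2 ≤ p) : Continuous (normRpowTaylorGap p a v) := by
  have hint : Continuous fun t ↦ ∫ s in t..1, (1 - s) * ‖a + s • v‖ ^ (p - 2) :=
    continuous_iff_continuousAt.2 fun t ↦
      (hasDerivAt_integral_one_sub_mul_norm_add_smul_rpow (by linarith)).continuousAt
  unfold normRpowTaylorGap
  fun_prop (disch := linarith)

theorem hasDerivAt_normRpowTaylorGap (hp : 2 ≤ p) (hx : a + t • v ≠ 0) :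
    HasDerivAt (normRpowTaylorGap p a v)
      (-((1 - t) * (p * (p - 2) * ‖a + t • v‖ ^ (p - 4) * ⟪a + t • v, v⟫ ^ 2))) t := by
  have hfun := hasDerivAt_norm_add_smul_rpow (p := p) (Or.inl hx)
  have hslope := ((hasDerivAt_id' t).const_sub 1).mul
    ((hasDerivAt_norm_add_smul_rpow_mul_inner (p := p - 2) hx).const_mul p)
  have hint := (hasDerivAt_integral_one_sub_mul_norm_add_smul_rpow (a := a) (v := v) (t := t)
    (p := p - 2) (by linarith)).const_mul (p * ‖v‖ ^ 2)
  refine (((hfun.const_sub _).sub hslope).sub hint).congr_deriv ?_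
  rw [show p - 2 - 2 = p - 4 by ring]
  ring

theorem norm_rpow_add_smul_taylor_le (hp : 2 ≤ p) (a v : E) :
    ‖a‖ ^ p + p * ‖a‖ ^ (p - 2) * ⟪a, v⟫
        + p * ∫ t in (0 : ℝ)..1, (1 - t) * ‖a + t • v‖ ^ (p - 2) * ‖v‖ ^ 2
      ≤ ‖a + v‖ ^ p := by
  rcases eq_or_ne v 0 with rfl | hv
  · simp
  obtain ⟨c, hc⟩ := exists_forall_ne_add_smul_ne_zero (a := a) hv
  have hgap : normRpowTaylorGap p a v 1 ≤ normRpowTaylorGap p a v 0 :=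
    image_le_of_hasDerivAt_nonpos_off_point zero_le_one
      (continuous_normRpowTaylorGap hp).continuousOn
      (fun t _ htc ↦ hasDerivAt_normRpowTaylorGap hp (hc t htc))
      (fun t ht _ ↦ neg_nonpos.2 <| mul_nonneg (sub_nonneg.2 ht.2.le) <|
        mul_nonneg (mul_nonneg (mul_nonneg (by linarith) (by linarith))
          (rpow_nonneg (norm_nonneg _) _)) (sq_nonneg _))
  rw [normRpowTaylorGap_one, normRpowTaylorGap] at hgap
  simp only [zero_smul, add_zero, sub_zero, one_mul, integral_mul_const] at hgap ⊢
  linarith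

end NormRpow

theorem rpow_norm_taylor_lower_bound_general
    (N : ℕ) (p : ℝ) (hp : 2 ≤ p)
    (a b : EuclideanSpace ℝ (Fin N)) :
    ‖a‖ ^ p + p * ‖a‖ ^ (p - 2) * ⟪a, b - a⟫
        + p * ∫ t in (0 : ℝ)..1, (1 - t) * ‖a + t • (b - a)‖ ^ (p - 2) * ‖b - a‖ ^ 2
      ≤ ‖b‖ ^ p := by
  simpa only [add_sub_cancel] using norm_rpow_add_smul_taylor_le hp a (b - a)

/-- second-order Taylor-type lower bound for `|·|^p`, `p ≥ 2`:
`|b|^p ≥ |a|^p + p|a|^{p-2}⟨a, b-a⟩ + p ∫₀¹ (1-t)|a+t(b-a)|^{p-2}|b-a|² dt`. -/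
theorem rpow_norm_taylor_lower_bound
    (N : ℕ) (hN : 1 ≤ N) (p : ℝ) (hp : 2 ≤ p)
    (a b : EuclideanSpace ℝ (Fin N)) :
    ‖a‖ ^ p + p * ‖a‖ ^ (p - 2) * ⟪a, b - a⟫
        + p * ∫ t in (0 : ℝ)..1, (1 - t) * ‖a + t • (b - a)‖ ^ (p - 2) * ‖b - a‖ ^ 2
      ≤ ‖b‖ ^ p :=
  rpow_norm_taylor_lower_bound_general N p hp a b
end

section
/- Let N ≥ 1 be an integer and A, B ∈ ℝ^N with |A| ≥ |B| and |B - A| > |A|/2, and set t₀ = |A| / |B - A|, so t₀ ∈ (0, 2). Then for every t ∈ [0,1], |A + t(B - A)| ≥ (1/4) |t₀ - t| (|A| + |B|). -/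
/-- if `|A| ≥ |B|` and `|B - A| > |A|/2` then, with `t₀ = |A|/|B-A| ∈ (0,2)`,
`|A + t(B-A)| ≥ (1/4)|t₀ - t|(|A| + |B|)` for every `t ∈ [0,1]`. -/
theorem segment_norm_lower_bound_large_difference
    (N : ℕ) (hN : 1 ≤ N) (A B : EuclideanSpace ℝ (Fin N))
    (hAB : ‖B‖ ≤ ‖A‖) (hdiff : ‖A‖ / 2 < ‖B - A‖)
    (t₀ : ℝ) (ht₀ : t₀ = ‖A‖ / ‖B - A‖) :
    (0 < t₀ ∧ t₀ < 2) ∧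
      ∀ t ∈ Set.Icc (0 : ℝ) 1, (1 / 4) * |t₀ - t| * (‖A‖ + ‖B‖) ≤ ‖A + t • (B - A)‖ := by
  have hd : 0 < ‖B - A‖ := lt_of_le_of_lt (by positivity) hdiff
  have hA0 : 0 < ‖A‖ := by
    by_contra h
    push_neg at h
    have hA : ‖A‖ = 0 := le_antisymm h (norm_nonneg A)
    have hB : ‖B‖ = 0 := le_antisymm (hA ▸ hAB) (norm_nonneg B)
    have hA' : A = 0 := norm_eq_zero.mp hA
    have hB' : B = 0 := norm_eq_zero.mp hB
    rw [hA', hB'] at hd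
    simp at hd
  have ha : ‖A‖ = t₀ * ‖B - A‖ := by
    rw [ht₀]; field_simp
  refine ⟨⟨by rw [ht₀]; positivity, by rw [ht₀, div_lt_iff₀ hd]; linarith⟩, ?_⟩
  intro t ht
  obtain ⟨ht0, ht1⟩ := ht
  have h1 : |‖A‖ - ‖t • (B - A)‖| ≤ ‖A + t • (B - A)‖ := by
    have := abs_norm_sub_norm_le A (-(t • (B - A)))
    simpa [sub_neg_eq_add] using this
  have h2 : |‖A‖ - ‖t • (B - A)‖| = |t₀ - t| * ‖B - A‖ := by
    rw [norm_smul, Real.norm_eq_abs, abs_of_nonneg ht0, ha, ← sub_mul, abs_mul,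
      abs_of_pos hd]
  have h3 : (1 / 4 : ℝ) * (‖A‖ + ‖B‖) ≤ ‖B - A‖ := by linarith
  calc (1 / 4) * |t₀ - t| * (‖A‖ + ‖B‖)
      = |t₀ - t| * ((1 / 4) * (‖A‖ + ‖B‖)) := by ring
    _ ≤ |t₀ - t| * ‖B - A‖ := mul_le_mul_of_nonneg_left h3 (abs_nonneg _)
    _ = |‖A‖ - ‖t • (B - A)‖| := h2.symm
    _ ≤ ‖A + t • (B - A)‖ := h1
end

section
/- Let p, N be real numbers with 1 < p < N and let γ be a real number with 0 < γ < ((N-p)/p)^p. Define f : [0,∞) → ℝ by f(μ) = (p-1) μ^p - (N-p) μ^{p-1} + γ. Then f has exactly two zeros γ₁ < γ₂ in [0,∞), and they satisfy 0 ≤ γ₁ < (N-p)/p < γ₂ ≤ (N-p)/(p-1). -/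
/-!
Writing `f(μ) = μ^{p-1} ((p-1)μ - (N-p)) + γ`, one finds
`f'(μ) = (p-1) μ^{p-2} (pμ - (N-p))`, so `f` decreases strictly on `[0, (N-p)/p]` and increases
strictly afterwards. Moreover `f 0 = γ > 0`, `f ((N-p)/p) = γ - ((N-p)/p)^p < 0` and
`f ((N-p)/(p-1)) = γ > 0`, so the intermediate value theorem gives one zero on each monotone piece
and strict monotonicity rules out any other.
-/

open Real Set

theorem exists_two_zeros_of_strictAntiOn_of_strictMonoOn {f : ℝ → ℝ} {l a b : ℝ}
    (hla : l ≤ a) (hab : a < b) (hf : ContinuousOn f (Icc l b))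
    (hanti : StrictAntiOn f (Icc l a)) (hmono : StrictMonoOn f (Ici a))
    (hl : 0 < f l) (ha : f a < 0) (hb : 0 < f b) :
    ∃ x₁ x₂, x₁ ∈ Ioo l a ∧ x₂ ∈ Ioo a b ∧ f x₁ = 0 ∧ f x₂ = 0 ∧
      ∀ x, l ≤ x → f x = 0 → x = x₁ ∨ x = x₂ := by
  obtain ⟨x₁, hx₁, hfx₁⟩ :=
    intermediate_value_Ioo' hla (hf.mono (Icc_subset_Icc_right hab.le)) ⟨ha, hl⟩
  obtain ⟨x₂, hx₂, hfx₂⟩ :=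
    intermediate_value_Ioo hab.le (hf.mono (Icc_subset_Icc_left hla)) ⟨ha, hb⟩
  refine ⟨x₁, x₂, hx₁, hx₂, hfx₁, hfx₂, fun x hlx hfx => ?_⟩
  rcases le_or_gt x a with hxa | hax
  · exact .inl <| hanti.injOn ⟨hlx, hxa⟩ (Ioo_subset_Icc_self hx₁) (hfx.trans hfx₁.symm)
  · exact .inr <| hmono.injOn hax.le hx₂.1.le (hfx.trans hfx₂.symm)

theorem Real.rpow_eq_rpow_sub_one_mul {x : ℝ} (hx : x ≠ 0) (y : ℝ) : x ^ y = x ^ (y - 1) * x := by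
  rw [← rpow_add_one hx, sub_add_cancel]

noncomputable def hardyPoly (p N γ μ : ℝ) : ℝ :=
  (p - 1) * μ ^ p - (N - p) * μ ^ (p - 1) + γ

namespace hardyPoly

variable {p N γ : ℝ}

theorem continuous (hp : 1 ≤ p) : Continuous (hardyPoly p N γ) := by
  unfold hardyPoly
  have hpow := continuous_rpow_const (by linarith : (0 : ℝ) ≤ p)
  have hpow' := continuous_rpow_const (by linarith : (0 : ℝ) ≤ p - 1)
  fun_prop

theorem apply_zero (hp : 1 < p) : hardyPoly p N γ 0 = γ := by
  simp [hardyPoly, zero_rpow (by linarith : p ≠ 0), zero_rpow (by linarith : p - 1 ≠ 0)]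

theorem eq_rpow_mul_add {μ : ℝ} (hμ : μ ≠ 0) :
    hardyPoly p N γ μ = μ ^ (p - 1) * ((p - 1) * μ - (N - p)) + γ := by
  rw [hardyPoly, rpow_eq_rpow_sub_one_mul hμ p]
  ring

theorem hasDerivAt {x : ℝ} (hx : x ≠ 0) :
    HasDerivAt (hardyPoly p N γ) ((p - 1) * x ^ (p - 2) * (p * x - (N - p))) x := by
  have h := (((hasDerivAt_rpow_const (p := p) (.inl hx)).const_mul (p - 1)).sub
    ((hasDerivAt_rpow_const (p := p - 1) (.inl hx)).const_mul (N - p))).add_const γ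
  refine h.congr_deriv ?_
  rw [rpow_eq_rpow_sub_one_mul hx (p - 1), show p - 1 - 1 = p - 2 by ring]
  ring

theorem strictAntiOn (hp : 1 < p) : StrictAntiOn (hardyPoly p N γ) (Icc 0 ((N - p) / p)) := by
  refine strictAntiOn_of_deriv_neg (convex_Icc _ _) (continuous hp.le).continuousOn ?_
  rw [interior_Icc]
  rintro x ⟨hx0, hxa⟩
  rw [(hasDerivAt hx0.ne').deriv]
  have hpx : p * x < N - p := by rwa [lt_div_iff₀' (by linarith)] at hxa
  exact mul_neg_of_pos_of_neg (mul_pos (by linarith) (rpow_pos_of_pos hx0 _)) (by linarith)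

theorem strictMonoOn (hp : 1 < p) (hpN : p ≤ N) :
    StrictMonoOn (hardyPoly p N γ) (Ici ((N - p) / p)) := by
  refine strictMonoOn_of_deriv_pos (convex_Ici _) (continuous hp.le).continuousOn ?_
  rw [interior_Ici]
  intro x (hax : _ < x)
  have hx0 : 0 < x := lt_of_le_of_lt (div_nonneg (by linarith) (by linarith)) hax
  rw [(hasDerivAt hx0.ne').deriv]
  have hpx : N - p < p * x := by rwa [div_lt_iff₀' (by linarith)] at hax
  exact mul_pos (mul_pos (by linarith) (rpow_pos_of_pos hx0 _)) (by linarith)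

theorem apply_sub_div (hp : 1 < p) (hpN : p < N) :
    hardyPoly p N γ ((N - p) / p) = γ - ((N - p) / p) ^ p := by
  have ha : (N - p) / p ≠ 0 := div_ne_zero (by linarith) (by linarith)
  have hpa : p * ((N - p) / p) = N - p := mul_div_cancel₀ _ (by linarith)
  rw [eq_rpow_mul_add ha, rpow_eq_rpow_sub_one_mul ha p]
  linear_combination ((N - p) / p) ^ (p - 1) * hpa

theorem apply_sub_div_sub_one (hp : 1 < p) (hpN : p < N) :
    hardyPoly p N γ ((N - p) / (p - 1)) = γ := by
  have hb : (N - p) / (p - 1) ≠ 0 := div_ne_zero (by linarith) (by linarith)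
  have hpb : (p - 1) * ((N - p) / (p - 1)) = N - p := mul_div_cancel₀ _ (by linarith)
  rw [eq_rpow_mul_add hb, hpb]
  ring

end hardyPoly

/-- for `1 < p < N` and `0 < γ < ((N-p)/p)^p`, the function
`f(μ) = (p-1)μ^p - (N-p)μ^{p-1} + γ` has exactly two zeros `γ₁ < γ₂` in `[0,∞)`,
with `0 ≤ γ₁ < (N-p)/p < γ₂ ≤ (N-p)/(p-1)`. -/
theorem two_roots_of_hardy_polynomial
    (p N γ : ℝ) (hp1 : 1 < p) (hpN : p < N)
    (hγ0 : 0 < γ) (hγ : γ < ((N - p) / p) ^ p) :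
    ∃ γ₁ γ₂ : ℝ,
      0 ≤ γ₁ ∧ γ₁ < (N - p) / p ∧ (N - p) / p < γ₂ ∧ γ₂ ≤ (N - p) / (p - 1) ∧
      (p - 1) * γ₁ ^ p - (N - p) * γ₁ ^ (p - 1) + γ = 0 ∧
      (p - 1) * γ₂ ^ p - (N - p) * γ₂ ^ (p - 1) + γ = 0 ∧
      ∀ μ : ℝ, 0 ≤ μ →
        (p - 1) * μ ^ p - (N - p) * μ ^ (p - 1) + γ = 0 → μ = γ₁ ∨ μ = γ₂ := by
  have hab : (N - p) / p < (N - p) / (p - 1) :=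
    div_lt_div_of_pos_left (by linarith) (by linarith) (by linarith)
  obtain ⟨γ₁, γ₂, hγ₁, hγ₂, hfγ₁, hfγ₂, honly⟩ :=
    exists_two_zeros_of_strictAntiOn_of_strictMonoOn (f := hardyPoly p N γ)
      (div_nonneg (by linarith) (by linarith)) hab (hardyPoly.continuous hp1.le).continuousOn
      (hardyPoly.strictAntiOn hp1) (hardyPoly.strictMonoOn hp1 hpN.le)
      (by rwa [hardyPoly.apply_zero hp1]) (by rw [hardyPoly.apply_sub_div hp1 hpN]; linarith)
      (by rwa [hardyPoly.apply_sub_div_sub_one hp1 hpN])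
  exact ⟨γ₁, γ₂, hγ₁.1.le, hγ₁.2, hγ₂.1, hγ₂.2.le, hfγ₁, hfγ₂, honly⟩
end

section
/- Let N ≥ 1 be an integer, p ≥ 2 a real number, and A, B ∈ ℝ^N. Then there exists a constant C_p > 0 depending only on p such that ∫₀^{1/4} |A + t(B - A)|^{p-2} dt + ∫₀^{1/4} |B + t(A - B)|^{p-2} dt ≥ C_p (|A| + |B|)^{p-2}. -/
open Real intervalIntegral

lemma seg_integrable (p : ℝ) (hq : (0:ℝ) ≤ p - 2) {N : ℕ}
    (A B : EuclideanSpace ℝ (Fin N)) :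
    IntervalIntegrable (fun t : ℝ => ‖A + t • (B - A)‖ ^ (p - 2))
      MeasureTheory.volume 0 (1/4) := by
  have hc : Continuous fun x : ℝ => x ^ (p - 2) :=
    continuous_iff_continuousAt.2 fun x => Real.continuousAt_rpow_const x _ (Or.inr hq)
  exact (hc.comp ((continuous_const.add
    ((continuous_id.smul continuous_const)) ).norm)).intervalIntegrable 0 (1/4)

lemma seg_integral_nonneg (p : ℝ) {N : ℕ} (A B : EuclideanSpace ℝ (Fin N)) :
    (0:ℝ) ≤ ∫ t in (0:ℝ)..(1/4), ‖A + t • (B - A)‖ ^ (p - 2) := by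
  apply intervalIntegral.integral_nonneg (by norm_num)
  intro t _
  exact Real.rpow_nonneg (norm_nonneg _) _

lemma seg_integral_lb (p : ℝ) (hp : 2 ≤ p) {N : ℕ} (A B : EuclideanSpace ℝ (Fin N))
    (h : ‖B‖ ≤ ‖A‖) :
    (1/4 : ℝ) ^ (p - 1) * (‖A‖ + ‖B‖) ^ (p - 2)
      ≤ ∫ t in (0:ℝ)..(1/4), ‖A + t • (B - A)‖ ^ (p - 2) := by
  have hq : (0:ℝ) ≤ p - 2 := by linarith
  have key : ∀ t ∈ Set.Icc (0:ℝ) (1/4),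
      ((‖A‖ + ‖B‖)/4) ^ (p - 2) ≤ ‖A + t • (B - A)‖ ^ (p - 2) := by
    intro t ht
    apply Real.rpow_le_rpow (by positivity) _ hq
    have h1 : ‖A‖ ≤ ‖A + t • (B - A)‖ + t * ‖B - A‖ := by
      calc ‖A‖ = ‖(A + t • (B - A)) - t • (B - A)‖ := by rw [add_sub_cancel_right]
        _ ≤ ‖A + t • (B - A)‖ + ‖t • (B - A)‖ := norm_sub_le _ _
        _ = ‖A + t • (B - A)‖ + t * ‖B - A‖ := by
            rw [norm_smul, Real.norm_eq_abs, abs_of_nonneg ht.1]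
    have h2 : ‖B - A‖ ≤ ‖B‖ + ‖A‖ := norm_sub_le _ _
    have h3 : t * ‖B - A‖ ≤ (1/4) * (‖B‖ + ‖A‖) := by
      apply mul_le_mul ht.2 h2 (norm_nonneg _) (by norm_num)
    linarith
  have hconst : IntervalIntegrable (fun _ : ℝ => ((‖A‖ + ‖B‖)/4) ^ (p - 2))
      MeasureTheory.volume 0 (1/4) := intervalIntegrable_const
  have hmono := intervalIntegral.integral_mono_on (by norm_num : (0:ℝ) ≤ 1/4)
    hconst (seg_integrable p hq A B) key
  rw [intervalIntegral.integral_const] at hmono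
  refine le_trans (le_of_eq ?_) hmono
  have hS : (0:ℝ) ≤ ‖A‖ + ‖B‖ := by positivity
  have : ((‖A‖ + ‖B‖)/4) ^ (p - 2) = (‖A‖ + ‖B‖) ^ (p - 2) * (1/4:ℝ) ^ (p - 2) := by
    rw [div_eq_mul_inv, Real.mul_rpow hS (by norm_num)]
    norm_num
  rw [this]
  have h4 : (1/4 : ℝ) ^ (p - 1) = (1/4:ℝ) ^ (p - 2) * (1/4:ℝ) := by
    rw [show p - 1 = (p-2) + 1 by ring, Real.rpow_add (by norm_num), Real.rpow_one]
  rw [h4]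
  simp [smul_eq_mul]
  ring

/-- for every `p ≥ 2` there is `C_p > 0`, depending only on `p`, such that
for all vectors `A, B ∈ ℝ^N`,
`∫₀^{1/4} |A + t(B-A)|^{p-2} dt + ∫₀^{1/4} |B + t(A-B)|^{p-2} dt ≥ C_p (|A| + |B|)^{p-2}`. -/
theorem sum_segment_integrals_lower_bound (p : ℝ) (hp : 2 ≤ p) :
    ∃ C > (0 : ℝ), ∀ (N : ℕ), 1 ≤ N → ∀ A B : EuclideanSpace ℝ (Fin N),
      C * (‖A‖ + ‖B‖) ^ (p - 2)
        ≤ (∫ t in (0 : ℝ)..(1 / 4), ‖A + t • (B - A)‖ ^ (p - 2))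
          + ∫ t in (0 : ℝ)..(1 / 4), ‖B + t • (A - B)‖ ^ (p - 2) := by
  refine ⟨(1/4 : ℝ) ^ (p - 1), Real.rpow_pos_of_pos (by norm_num) _, ?_⟩
  intro N _ A B
  rcases le_total ‖B‖ ‖A‖ with h | h
  · have := seg_integral_lb p hp A B h
    have h2 := seg_integral_nonneg p B A
    linarith
  · have := seg_integral_lb p hp B A h
    have h2 := seg_integral_nonneg p A B
    rw [add_comm ‖A‖ ‖B‖] at *
    linarith
end
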